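/- Let n ≥ 2 be an integer, a > 1/n a real number, l = (na-1)/(n²-1), and u = (na-1)(n+1)/(n-1). The function f(x) = (na-1+x)^n / x on [l, u] attains its maximum at x = u, with maximum value 2^n · n^n · (na-1)^(n-1) · (n-1)^(1-n) / (n+1). -/

import Mathlib

/-!
With `c = n a - 1 > 0`, the map `x ↦ (c + x) ^ n / x` is convex on `(0, ∞)`, so on `[l, u]` it is
maximal at an endpoint. Both endpoint values are explicit, and their ratio `f l / f u` equals
`n ^ n / (2 ^ n (n + 1) ^ (n - 2))`, which is at most `1`.
-/

open Set

theorem Nat.pow_self_le_two_pow_mul_succ_pow {n : ℕ} (hn : 2 ≤ n) :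
    n ^ n ≤ 2 ^ n * (n + 1) ^ (n - 2) := by
  obtain ⟨m, rfl⟩ : ∃ m, n = m + 2 := ⟨n - 2, by omega⟩
  rcases m with _ | _ | k
  · norm_num
  · norm_num
  · have hsq : (k + 4) ^ 2 ≤ 2 ^ (k + 4) := by
      clear hn
      induction k with
      | zero => norm_num
      | succ k ih =>
        calc (k + 1 + 4) ^ 2 ≤ 2 * (k + 4) ^ 2 := by ring_nf; omega
          _ ≤ 2 * 2 ^ (k + 4) := by omega
          _ = 2 ^ (k + 1 + 4) := by ring
    calc (k + 4) ^ (k + 4) = (k + 4) ^ 2 * (k + 4) ^ (k + 2) := by ring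
      _ ≤ 2 ^ (k + 4) * (k + 5) ^ (k + 2) := by gcongr; omega

theorem convexOn_add_pow_div {c : ℝ} (hc : 0 ≤ c) (n : ℕ) :
    ConvexOn ℝ (Ioi 0) fun x => (c + x) ^ n / x := by
  induction n with
  | zero => simpa [one_div] using convexOn_zpow (𝕜 := ℝ) (-1)
  | succ n ih =>
    have hpow : ConvexOn ℝ (Ioi 0) fun x : ℝ => (c + x) ^ n :=
      ((convexOn_pow n).translate_right c).subset
        (fun x hx => by simp only [mem_preimage, mem_Ici]; linarith [mem_Ioi.1 hx])
        (convex_Ioi 0)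
    -- `(c + x) ^ (n + 1) / x = c * ((c + x) ^ n / x) + (c + x) ^ n`
    refine ((ih.smul hc).add hpow).congr fun x hx => ?_
    have hx0 : x ≠ 0 := (mem_Ioi.1 hx).ne'
    simp only [Pi.add_apply, smul_eq_mul]
    field_simp
    ring

theorem add_pow_div_eq_upper {N c : ℝ} (hN : N - 1 ≠ 0) (hc : c ≠ 0) {n : ℕ} (hn : 1 ≤ n) :
    (c + c * (N + 1) / (N - 1)) ^ n / (c * (N + 1) / (N - 1)) =
      2 ^ n * N ^ n * c ^ (n - 1) * (N - 1) ^ ((1 : ℤ) - n) / (N + 1) := by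
  obtain ⟨m, rfl⟩ : ∃ m, n = m + 1 := ⟨n - 1, by omega⟩
  rw [show c + c * (N + 1) / (N - 1) = 2 * N * c / (N - 1) by field_simp; ring,
    show (1 : ℤ) - (m + 1 : ℕ) = -(m : ℤ) by push_cast; ring, zpow_neg, zpow_natCast,
    Nat.add_sub_cancel, div_pow]
  field_simp
  ring

theorem add_pow_div_lower_mul {N c : ℝ} (hN₁ : N - 1 ≠ 0) (hN₂ : N + 1 ≠ 0) (hc : c ≠ 0)
    {n : ℕ} (hn : 2 ≤ n) :
    (c + c / (N ^ 2 - 1)) ^ n / (c / (N ^ 2 - 1)) * (2 ^ n * (N + 1) ^ (n - 2)) =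
      (c + c * (N + 1) / (N - 1)) ^ n / (c * (N + 1) / (N - 1)) * N ^ n := by
  obtain ⟨m, rfl⟩ : ∃ m, n = m + 2 := ⟨n - 2, by omega⟩
  have h3 : N ^ 2 - 1 = (N - 1) * (N + 1) := by ring
  rw [show c + c * (N + 1) / (N - 1) = 2 * N * c / (N - 1) by field_simp; ring,
    show c + c / (N ^ 2 - 1) = N ^ 2 * c / ((N - 1) * (N + 1)) by rw [h3]; field_simp; ring,
    h3, Nat.add_sub_cancel, div_pow, div_pow]
  field_simp
  rw [mul_pow (N - 1)]
  ring

theorem add_pow_div_lower_le_upper {N c : ℝ} (hN : 1 < N) (hc : 0 < c) {n : ℕ} (hn : 2 ≤ n)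
    (hpow : N ^ n ≤ 2 ^ n * (N + 1) ^ (n - 2)) :
    (c + c / (N ^ 2 - 1)) ^ n / (c / (N ^ 2 - 1)) ≤
      (c + c * (N + 1) / (N - 1)) ^ n / (c * (N + 1) / (N - 1)) := by
  have hK : 0 < 2 ^ n * (N + 1) ^ (n - 2) := by positivity
  refine le_of_mul_le_mul_right ?_ hK
  rw [add_pow_div_lower_mul (by linarith) (by linarith) hc.ne' hn]
  gcongr

theorem stmt_2 (n : ℕ) (hn : 2 ≤ n) (a : ℝ) (ha : a > 1 / n)
    (l u : ℝ) (hl : l = (n * a - 1) / (n ^ 2 - 1))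
    (hu : u = (n * a - 1) * (n + 1) / (n - 1))
    (f : ℝ → ℝ) (hf : ∀ x, f x = (n * a - 1 + x) ^ n / x) :
    (∀ x ∈ Set.Icc l u, f x ≤ f u) ∧
      f u = 2 ^ n * (n : ℝ) ^ n * (n * a - 1) ^ (n - 1) * ((n : ℝ) - 1) ^ ((1 : ℤ) - n) / (n + 1) := by
  obtain rfl : f = fun x => (n * a - 1 + x) ^ n / x := funext hf
  subst hl hu
  have hN : (1 : ℝ) < n := by exact_mod_cast (by omega : 1 < n)
  have hc : 0 < n * a - 1 := by
    rw [gt_iff_lt, div_lt_iff₀ (by linarith)] at ha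
    linarith
  have hpow : (n : ℝ) ^ n ≤ 2 ^ n * (n + 1) ^ (n - 2) := by
    exact_mod_cast Nat.pow_self_le_two_pow_mul_succ_pow hn
  have hN2 : (0 : ℝ) < n ^ 2 - 1 := by nlinarith
  refine ⟨fun x hx => ?_, add_pow_div_eq_upper (by linarith) hc.ne' (by omega)⟩
  refine ((convexOn_add_pow_div hc.le n).le_max_of_mem_Icc ?_ ?_ hx).trans
    (max_le (add_pow_div_lower_le_upper hN hc hn hpow) le_rfl)
  · exact mem_Ioi.2 (by positivity)
  · exact mem_Ioi.2 (by positivity)
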